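/- arXiv:2301.08844 — 3 statements merged into one kernel-verified Lean document; each statement's English description precedes it below -/
import Mathlib

section
/- Let (a_1,...,a_m) and (b_1,...,b_m) be nonnegative real vectors with ∑_{j=1}^m (a_j − b_j)^2 ≤ β for some β ≥ 0, and suppose ∑_j a_j > 0 and ∑_j b_j > 0. Then for every index l, |a_l/(∑_j a_j) − b_l/(∑_j b_j)|^2 ≤ 2mβ/(∑_j b_j)^2. -/
/-!
Put `A = ∑ a`, `B = ∑ b`, `t = a_l / A ∈ [0, 1]` and `u = a - b`. Then
`B (a_l / A - b_l / B) = u_l - t ∑ u = ∑_j (δ_{jl} - t) u_j`, a combination of the `u_j` with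
weights of absolute value at most `1`, so Cauchy–Schwarz bounds its square by `m ∑ u_j² ≤ m β`.
-/

open Finset

theorem sq_sub_mul_sum_le_card_mul_sum_sq {ι : Type*} [Fintype ι] (u : ι → ℝ) (l : ι) {t : ℝ}
    (ht₀ : 0 ≤ t) (ht₁ : t ≤ 1) :
    (u l - t * ∑ j, u j) ^ 2 ≤ Fintype.card ι * ∑ j, u j ^ 2 := by
  classical
  set w : ι → ℝ := fun j => (if j = l then 1 else 0) - t
  have hw : ∀ j, w j ^ 2 ≤ 1 := by
    intro j
    by_cases hj : j = l <;> simp only [w, hj, if_true, if_false] <;> nlinarith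
  have hrepr : u l - t * ∑ j, u j = ∑ j, w j * u j := by
    simp only [w, sub_mul, ite_mul, one_mul, zero_mul, sum_sub_distrib, sum_ite_eq', mem_univ,
      if_true, mul_sum]
  calc (u l - t * ∑ j, u j) ^ 2 = (∑ j, w j * u j) ^ 2 := by rw [hrepr]
    _ ≤ Fintype.card ι * ∑ j, (w j * u j) ^ 2 := by
      simpa using sq_sum_le_card_mul_sum_sq (s := univ) (f := fun j => w j * u j)
    _ ≤ Fintype.card ι * ∑ j, u j ^ 2 := by
      refine mul_le_mul_of_nonneg_left (sum_le_sum fun j _ => ?_) (Nat.cast_nonneg _)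
      rw [mul_pow]
      exact mul_le_of_le_one_left (sq_nonneg _) (hw j)

theorem stmt_1_general (m : ℕ) (a b : Fin m → ℝ) (β : ℝ)
    (ha : ∀ j, 0 ≤ a j)
    (hdiff : ∑ j, (a j - b j) ^ 2 ≤ β)
    (hsa : 0 < ∑ j, a j) (hsb : 0 < ∑ j, b j) :
    ∀ l : Fin m, |a l / (∑ j, a j) - b l / (∑ j, b j)| ^ 2 ≤ 2 * m * β / (∑ j, b j) ^ 2 := by
  intro l
  set A := ∑ j, a j
  set B := ∑ j, b j
  have ht₀ : 0 ≤ a l / A := div_nonneg (ha l) hsa.le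
  have ht₁ : a l / A ≤ 1 :=
    div_le_one_of_le₀ (single_le_sum (fun j _ => ha j) (mem_univ l)) hsa.le
  have hβ : 0 ≤ β := (sum_nonneg fun j _ => sq_nonneg (a j - b j)).trans hdiff
  have hkey : B * (a l / A - b l / B) = (a l - b l) - a l / A * ∑ j, (a j - b j) := by
    rw [sum_sub_distrib]
    field_simp
    ring
  rw [sq_abs, le_div_iff₀ (by positivity)]
  calc (a l / A - b l / B) ^ 2 * B ^ 2 = (B * (a l / A - b l / B)) ^ 2 := by ring
    _ ≤ m * ∑ j, (a j - b j) ^ 2 := by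
      simpa [hkey] using sq_sub_mul_sum_le_card_mul_sum_sq (a - b) l ht₀ ht₁
    _ ≤ m * β := by gcongr
    _ ≤ 2 * m * β := by nlinarith [(Nat.cast_nonneg m : (0 : ℝ) ≤ m)]

theorem stmt_1 (m : ℕ) (a b : Fin m → ℝ) (β : ℝ) (hβ : 0 ≤ β)
    (ha : ∀ j, 0 ≤ a j) (hb : ∀ j, 0 ≤ b j)
    (hdiff : ∑ j, (a j - b j) ^ 2 ≤ β)
    (hsa : 0 < ∑ j, a j) (hsb : 0 < ∑ j, b j) :
    ∀ l : Fin m, |a l / (∑ j, a j) - b l / (∑ j, b j)| ^ 2 ≤ 2 * m * β / (∑ j, b j) ^ 2 :=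
  stmt_1_general m a b β ha hdiff hsa hsb
end

section
/- Let a_1,...,a_m be nonnegative reals summing to 1, let v_1,...,v_m be reals, set S = ∑_i max(a_i+v_i, 0), and assume max_i |v_i| ≤ M with mM < 1 (so S > 0). Define b_i = max(a_i+v_i,0)/S. Then max_i |a_i − b_i| ≤ (M + mM)/(1 − mM). -/
/-! Clipping at zero moves each coordinate by at most `M`, since `max · 0` is 1-Lipschitz and fixes
the nonnegative `a i`; hence the normalizing sum `S` is within `m M` of `1`. Writing
`a i - c / S = (a i (S - 1) + (a i - c)) / S` and using `a i ≤ 1`, `S ≥ 1 - m M` gives the bound. -/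

open Finset

lemma abs_max_add_zero_sub_le {a v : ℝ} (ha : 0 ≤ a) : |max (a + v) 0 - a| ≤ |v| := by
  simpa [max_eq_left ha] using abs_max_sub_max_le_abs (a + v) a 0

lemma abs_sum_sub_sum_le_card_mul {ι : Type*} [Fintype ι] {a c : ι → ℝ} {M : ℝ}
    (h : ∀ i, |c i - a i| ≤ M) : |∑ i, c i - ∑ i, a i| ≤ Fintype.card ι * M := by
  rw [← sum_sub_distrib]
  calc |∑ i, (c i - a i)| ≤ ∑ i, |c i - a i| := abs_sum_le_sum_abs _ _
    _ ≤ ∑ _i : ι, M := sum_le_sum fun i _ => h i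
    _ = Fintype.card ι * M := by rw [sum_const, card_univ, nsmul_eq_mul]

lemma abs_sub_div_le_of_abs_sub_one_le {a c S δ ε : ℝ} (ha₀ : 0 ≤ a) (ha₁ : a ≤ 1)
    (hc : |a - c| ≤ δ) (hS : |S - 1| ≤ ε) (hε : ε < 1) :
    |a - c / S| ≤ (δ + ε) / (1 - ε) := by
  have hS_lb : 1 - ε ≤ S := by linarith [(abs_le.mp hS).1]
  have hS_pos : 0 < S := by linarith
  have hnum : |a * S - c| ≤ δ + ε :=
    calc |a * S - c| = |a * (S - 1) + (a - c)| := by ring_nf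
      _ ≤ |a * (S - 1)| + |a - c| := abs_add_le _ _
      _ ≤ ε + δ := by
        gcongr
        rw [abs_mul, abs_of_nonneg ha₀]
        nlinarith [abs_nonneg (S - 1)]
      _ = δ + ε := add_comm _ _
  have hδε : 0 ≤ δ + ε := (abs_nonneg _).trans hnum
  calc |a - c / S| = |a * S - c| / S := by
        rw [sub_div' hS_pos.ne', abs_div, abs_of_pos hS_pos]
    _ ≤ (δ + ε) / S := by gcongr
    _ ≤ (δ + ε) / (1 - ε) := by gcongr

theorem stmt_2 (m : ℕ) (a v : Fin m → ℝ) (M : ℝ)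
    (ha : ∀ i, 0 ≤ a i) (hsum : ∑ i, a i = 1)
    (hv : ∀ i, |v i| ≤ M) (hM : m * M < 1)
    (b : Fin m → ℝ)
    (hb : ∀ i, b i = max (a i + v i) 0 / ∑ j, max (a j + v j) 0) :
    ∀ i, |a i - b i| ≤ (M + m * M) / (1 - m * M) := by
  intro i
  have hclip : ∀ j, |max (a j + v j) 0 - a j| ≤ M := fun j =>
    (abs_max_add_zero_sub_le (ha j)).trans (hv j)
  have hS : |∑ j, max (a j + v j) 0 - 1| ≤ m * M := by
    simpa [hsum] using abs_sum_sub_sum_le_card_mul hclip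
  have ha₁ : a i ≤ 1 := hsum ▸ single_le_sum (fun j _ => ha j) (mem_univ i)
  rw [hb i]
  exact abs_sub_div_le_of_abs_sub_one_le (ha i) ha₁ (abs_sub_comm (a i) _ ▸ hclip i) hS hM
end

section
/- Let d ≥ 1, and for i = 1,…,d let P_i(·|·) and Q_i(·|·) be conditional probability kernels defining product-form distributions P(x₁,…,x_d) = ∏_i P_i(x_i | x_{Π_i}) and Q(x₁,…,x_d) = ∏_i Q_i(x_i | x_{Π_i}) on {0,1}^d, where each parent set Π_i ⊆ {1,…,i−1}. If for every i and every configuration, |P_i(x_i | x_{Π_i}) − Q_i(x_i | x_{Π_i})| ≤ c / P(x_{Π_i}) whenever P(x_{Π_i}) > 0 (and Q_i = P_i on zero-probability parent configurations), and |Π_i| ≤ k for all i, then ∑_{x ∈ {0,1}^d} |P(x) − Q(x)| ≤ 2·d·2^k·c. -/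
/-!
Telescoping `∏ P_j - ∏ Q_j = ∑_i (P_i - Q_i) ∏_{j<i} P_j ∏_{j>i} Q_j` leaves one term per
coordinate `i`. Summed over `x`, the later kernels `Q_j` (`j > i`) can be integrated out one
coordinate at a time, largest first: against a function not depending on those coordinates,
each of them acts like the uniform weight `1/2`. The same marginalization writes the parent
marginal `P(x_{Π_i})` as `2^{-#{j ≥ i}}` times the mass of `∏_{j<i} P_j` on the fibre of
`x_{Π_i}`. After `|P_i - Q_i| ≤ c / P(x_{Π_i})` the `i`-th term is therefore `2c` times a sum of
fibre ratios, which is at most the number `2^{|Π_i|} ≤ 2^k` of parent configurations.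
-/

open Finset Function

theorem Finset.prod_sub_prod_eq_sum {ι R : Type*} [CommRing R] [LinearOrder ι] (s : Finset ι)
    (f g : ι → R) :
    ∏ i ∈ s, f i - ∏ i ∈ s, g i =
      ∑ i ∈ s, (f i - g i) * (∏ j ∈ s with j < i, f j) * ∏ j ∈ s with i < j, g j := by
  have h := prod_add_ordered s g (fun i => f i - g i)
  simp only [add_sub_cancel] at h
  rw [h, add_sub_cancel_left]

theorem sum_div_sum_fiber_le_card {X Z : Type*} [Fintype X] [Fintype Z] [DecidableEq Z]
    (w : X → ℝ) (π : X → Z) :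
    ∑ x, w x / ∑ y with π y = π x, w y ≤ Fintype.card Z := by
  rw [← sum_fiberwise univ π]
  calc ∑ z, ∑ x with π x = z, w x / ∑ y with π y = π x, w y
        = ∑ z, (∑ x with π x = z, w x) / ∑ y with π y = z, w y := by
          refine sum_congr rfl fun z _ => ?_
          rw [sum_div]
          exact sum_congr rfl fun x hx => by rw [(mem_filter.1 hx).2]
    _ ≤ ∑ _z : Z, (1 : ℝ) := sum_le_sum fun z _ => div_self_le_one _
    _ = Fintype.card Z := by simp

section BayesNet

variable {ι : Type*} [Fintype ι] [DecidableEq ι]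

theorem sum_mul_eq_sum_div_two (i : ι) {g K : (ι → Bool) → ℝ}
    (hg : DependsOn g {i}ᶜ) (hK : ∀ x, ∑ b, K (update x i b) = 1) :
    ∑ x, g x * K x = (∑ x, g x) / 2 := by
  let σ : Equiv.Perm (ι → Bool) :=
    Involutive.toPerm (fun x => update x i (!x i)) fun x => by simp
  have hgσ : ∀ x, g (σ x) = g x := fun x =>
    hg fun j hj => update_of_ne hj _ _
  have hKσ : ∀ x, K x + K (σ x) = 1 := fun x => by
    rw [← hK x, Fintype.sum_bool, show σ x = update x i (!x i) from rfl]
    have hfix : ∀ b, x i = b → update x i b = x := fun b h => h ▸ update_eq_self i x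
    cases hx : x i
    · rw [hfix false hx, Bool.not_false, add_comm]
    · rw [hfix true hx, Bool.not_true]
  calc ∑ x, g x * K x = (∑ x, g x * K x + ∑ x, g (σ x) * K (σ x)) / 2 := by
        rw [Equiv.sum_comp σ (fun x => g x * K x)]; ring
    _ = (∑ x, g x * (K x + K (σ x))) / 2 := by
        simp only [hgσ, mul_add, sum_add_distrib]
    _ = (∑ x, g x) / 2 := by simp only [hKσ, mul_one]

variable [LinearOrder ι] {K : ι → (ι → Bool) → ℝ}

theorem sum_mul_prod_eq_sum_div_two_pow (hK_dep : ∀ i, DependsOn (K i) (Set.Iic i))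
    (hK_sum : ∀ i x, ∑ b, K i (update x i b) = 1) (s : Finset ι) {f : (ι → Bool) → ℝ}
    (hf : DependsOn f (↑s)ᶜ) :
    ∑ x, f x * ∏ i ∈ s, K i x = (∑ x, f x) / 2 ^ #s := by
  induction s using Finset.induction_on_max generalizing f with
  | empty => simp
  | insert a s hlt ih =>
    have ha : a ∉ s := fun h => lt_irrefl a (hlt a h)
    have hdep : DependsOn (fun x => f x * ∏ i ∈ s, K i x) {a}ᶜ := fun x y hxy => by
      have hf' : f x = f y := hf fun j hj => hxy j fun h => hj (h ▸ mem_insert_self a s)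
      have hK' : ∀ i ∈ s, K i x = K i y := fun i hi =>
        hK_dep i fun j hj => hxy j (hj.trans_lt (hlt i hi)).ne
      change f x * _ = f y * _
      rw [hf', prod_congr rfl hK']
    calc ∑ x, f x * ∏ i ∈ insert a s, K i x = ∑ x, (f x * ∏ i ∈ s, K i x) * K a x :=
          sum_congr rfl fun x _ => by rw [prod_insert ha]; ring
      _ = (∑ x, f x) / 2 ^ #(insert a s) := by
          rw [sum_mul_eq_sum_div_two a hdep (hK_sum a),
            ih (hf.mono (by simp)), card_insert_of_notMem ha, pow_succ,
            div_div]

theorem sum_filter_prod_eq_div_two_pow (hK_dep : ∀ i, DependsOn (K i) (Set.Iic i))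
    (hK_sum : ∀ i x, ∑ b, K i (update x i b) = 1) (i : ι) {p : (ι → Bool) → Prop}
    [DecidablePred p] (hp : DependsOn p (Set.Iio i)) :
    ∑ y with p y, ∏ j, K j y = (∑ y with p y, ∏ j with j < i, K j y) / 2 ^ #{j | i ≤ j} := by
  have hsplit : ∀ y, (if p y then ∏ j, K j y else 0)
      = (if p y then ∏ j with j < i, K j y else 0) * ∏ j with i ≤ j, K j y := fun y => by
    split_ifs
    · rw [← prod_filter_mul_prod_filter_not univ (· < i)]
      simp only [not_lt]
    · rw [zero_mul]
  simp only [sum_filter]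
  rw [sum_congr rfl fun y _ => hsplit y]
  refine sum_mul_prod_eq_sum_div_two_pow hK_dep hK_sum _ fun x y hxy => ?_
  have hxy' : ∀ j ∈ Set.Iio i, x j = y j := fun j hj => hxy j (by simpa using hj)
  have hK' : ∀ j ∈ univ.filter (· < i), K j x = K j y := fun j hj =>
    hK_dep j fun l hl => hxy' l (lt_of_le_of_lt hl (mem_filter.1 hj).2)
  simp only [hp hxy', prod_congr rfl hK']

theorem card_filter_le_eq_card_filter_lt_add_one (i : ι) : #{j | i ≤ j} = #{j | i < j} + 1 := by
  rw [← card_insert_of_notMem (s := {j | i < j}) (a := i) (by simp)]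
  congr 1
  ext j
  simp [le_iff_eq_or_lt, eq_comm]

theorem sum_abs_sub_mul_prod_mul_prod_le {P Q : ι → (ι → Bool) → ℝ}
    (hP_dep : ∀ i, DependsOn (P i) (Set.Iic i)) (hQ_dep : ∀ i, DependsOn (Q i) (Set.Iic i))
    (hP_nonneg : ∀ i x, 0 ≤ P i x) (hQ_nonneg : ∀ i x, 0 ≤ Q i x)
    (hP_sum : ∀ i x, ∑ b, P i (update x i b) = 1) (hQ_sum : ∀ i x, ∑ b, Q i (update x i b) = 1)
    {i : ι} {S : Finset ι} (hS : ∀ j ∈ S, j < i) {c : ℝ} (hc : 0 ≤ c)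
    (hclose : ∀ x, |P i x - Q i x| ≤ c / ∑ y with ∀ j ∈ S, y j = x j, ∏ j, P j y) :
    ∑ x, |(P i x - Q i x) * (∏ j with j < i, P j x) * ∏ j with i < j, Q j x|
      ≤ 2 * 2 ^ #S * c := by
  set w : (ι → Bool) → ℝ := fun x => ∏ j with j < i, P j x
  have hw_nonneg : ∀ x, 0 ≤ w x := fun x => prod_nonneg fun j _ => hP_nonneg j x
  have hmarg : ∀ x, ∑ y with ∀ j ∈ S, y j = x j, ∏ j, P j y
      = (∑ y with S.restrict y = S.restrict x, w y) / 2 ^ #{j | i ≤ j} := fun x => by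
    rw [sum_filter_prod_eq_div_two_pow hP_dep hP_sum i]
    · simp [funext_iff, w]
    · exact fun y z h => propext (forall₂_congr fun j hj => by rw [h j (hS j hj)])
  have hhead : ∑ x, |P i x - Q i x| * w x ≤ 2 ^ #{j | i ≤ j} * 2 ^ #S * c := calc
      ∑ x, |P i x - Q i x| * w x
        ≤ ∑ x, c * 2 ^ #{j | i ≤ j} * (w x / ∑ y with S.restrict y = S.restrict x, w y) :=
          sum_le_sum fun x _ => by
            have h := hclose x
            rw [hmarg, div_div_eq_mul_div] at h
            calc |P i x - Q i x| * w x
                ≤ c * 2 ^ #{j | i ≤ j} / (∑ y with S.restrict y = S.restrict x, w y) * w x :=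
                  mul_le_mul_of_nonneg_right h (hw_nonneg x)
              _ = _ := by ring
      _ = c * 2 ^ #{j | i ≤ j} * ∑ x, w x / ∑ y with S.restrict y = S.restrict x, w y := by
          rw [mul_sum]
      _ ≤ c * 2 ^ #{j | i ≤ j} * Fintype.card (S → Bool) := by
          gcongr
          exact sum_div_sum_fiber_le_card w S.restrict
      _ = 2 ^ #{j | i ≤ j} * 2 ^ #S * c := by
          rw [Fintype.card_fun, Fintype.card_bool, Fintype.card_coe]
          push_cast
          ring
  have htail_indep : DependsOn (fun x => |P i x - Q i x| * w x) (↑({j | i < j} : Finset ι))ᶜ :=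
    fun x y hxy => by
      have h : ∀ j ∈ Set.Iic i, x j = y j := fun j hj => hxy j (by simpa using hj)
      have hw' : w x = w y := prod_congr rfl fun j hj =>
        hP_dep j fun l hl => h l (hl.trans (mem_filter.1 hj).2.le)
      change |P i x - Q i x| * w x = |P i y - Q i y| * w y
      rw [hP_dep i h, hQ_dep i h, hw']
  calc ∑ x, |(P i x - Q i x) * (∏ j with j < i, P j x) * ∏ j with i < j, Q j x|
      = ∑ x, (|P i x - Q i x| * w x) * ∏ j with i < j, Q j x := sum_congr rfl fun x _ => by
        rw [abs_mul, abs_mul, abs_of_nonneg (hw_nonneg x),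
          abs_of_nonneg (prod_nonneg fun j _ => hQ_nonneg j x)]
    _ = (∑ x, |P i x - Q i x| * w x) / 2 ^ #{j | i < j} :=
        sum_mul_prod_eq_sum_div_two_pow hQ_dep hQ_sum _ htail_indep
    _ ≤ 2 ^ #{j | i ≤ j} * 2 ^ #S * c / 2 ^ #{j | i < j} := by gcongr
    _ = 2 * 2 ^ #S * c := by
        rw [card_filter_le_eq_card_filter_lt_add_one, pow_succ]
        field_simp

end BayesNet

theorem stmt_19_general (d : ℕ) (k : ℕ) (c : ℝ) (hc : 0 ≤ c)
    (Par : Fin d → Finset (Fin d))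
    (hPar_lt : ∀ i, ∀ j ∈ Par i, j < i)
    (hPar_card : ∀ i, (Par i).card ≤ k)
    (Pc Qc : Fin d → (Fin d → Bool) → ℝ)
    -- each Pc i x = P_i(x_i | x_{Π_i}) depends only on coordinates in {i} ∪ Π i
    (hPc_dep : ∀ i, ∀ x y : Fin d → Bool, (∀ j ∈ insert i (Par i), x j = y j) → Pc i x = Pc i y)
    (hQc_dep : ∀ i, ∀ x y : Fin d → Bool, (∀ j ∈ insert i (Par i), x j = y j) → Qc i x = Qc i y)
    (hPc_nonneg : ∀ i x, 0 ≤ Pc i x) (hQc_nonneg : ∀ i x, 0 ≤ Qc i x)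
    (hPc_sum : ∀ i (x : Fin d → Bool), ∑ b : Bool, Pc i (Function.update x i b) = 1)
    (hQc_sum : ∀ i (x : Fin d → Bool), ∑ b : Bool, Qc i (Function.update x i b) = 1)
    -- marginal of the parent configuration under P
    (marg : Fin d → (Fin d → Bool) → ℝ)
    (hmarg : ∀ i x, marg i x =
      ∑ y ∈ Finset.univ.filter (fun y : Fin d → Bool => ∀ j ∈ Par i, y j = x j),
        ∏ i', Pc i' y)
    (hclose : ∀ i (x : Fin d → Bool),
      (0 < marg i x → |Pc i x - Qc i x| ≤ c / marg i x) ∧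
      (marg i x = 0 → Qc i x = Pc i x)) :
    ∑ x : Fin d → Bool, |(∏ i, Pc i x) - ∏ i, Qc i x| ≤ 2 * d * 2 ^ k * c := by
  have hdep : ∀ K : Fin d → (Fin d → Bool) → ℝ,
      (∀ i, ∀ x y : Fin d → Bool, (∀ j ∈ insert i (Par i), x j = y j) → K i x = K i y) →
      ∀ i, DependsOn (K i) (Set.Iic i) := fun K hK i x y hxy =>
    hK i x y fun j hj => hxy j <| (mem_insert.1 hj).elim le_of_eq fun h => (hPar_lt i j h).le
  -- On parent configurations of zero mass both sides vanish, since `c / 0 = 0`.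
  have hclose' : ∀ i x, |Pc i x - Qc i x| ≤ c / ∑ y with ∀ j ∈ Par i, y j = x j, ∏ j, Pc j y :=
    fun i x => by
      rw [← hmarg]
      have hmarg_nonneg : 0 ≤ marg i x :=
        (hmarg i x).symm ▸ sum_nonneg fun y _ => prod_nonneg fun j _ => hPc_nonneg j y
      rcases hmarg_nonneg.eq_or_lt with h | h
      · rw [(hclose i x).2 h.symm, ← h, sub_self, abs_zero, div_zero]
      · exact (hclose i x).1 h
  have hterm : ∀ i, ∑ x, |(Pc i x - Qc i x) * (∏ j with j < i, Pc j x) * ∏ j with i < j, Qc j x|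
      ≤ 2 * 2 ^ k * c := fun i =>
    -- `convert` only reconciles two decidability instances of the filter in `hclose'`.
    (sum_abs_sub_mul_prod_mul_prod_le (hdep Pc hPc_dep) (hdep Qc hQc_dep) hPc_nonneg hQc_nonneg
      hPc_sum hQc_sum (hPar_lt i) hc (by convert hclose' i)).trans
      (by gcongr; exacts [one_le_two, hPar_card i])
  calc ∑ x, |∏ i, Pc i x - ∏ i, Qc i x|
      ≤ ∑ x, ∑ i, |(Pc i x - Qc i x) * (∏ j with j < i, Pc j x) * ∏ j with i < j, Qc j x| :=
        sum_le_sum fun x _ => by rw [prod_sub_prod_eq_sum]; exact abs_sum_le_sum_abs _ _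
    _ = ∑ i, ∑ x, |(Pc i x - Qc i x) * (∏ j with j < i, Pc j x) * ∏ j with i < j, Qc j x| :=
        sum_comm
    _ ≤ ∑ _i : Fin d, 2 * 2 ^ k * c := sum_le_sum fun i _ => hterm i
    _ = 2 * d * 2 ^ k * c := by
        rw [sum_const, card_univ, Fintype.card_fin, nsmul_eq_mul]
        ring

theorem stmt_19 (d : ℕ) (hd : 1 ≤ d) (k : ℕ) (c : ℝ) (hc : 0 ≤ c)
    (Par : Fin d → Finset (Fin d))
    (hPar_lt : ∀ i, ∀ j ∈ Par i, j < i)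
    (hPar_card : ∀ i, (Par i).card ≤ k)
    (Pc Qc : Fin d → (Fin d → Bool) → ℝ)
    -- each Pc i x = P_i(x_i | x_{Π_i}) depends only on coordinates in {i} ∪ Π i
    (hPc_dep : ∀ i, ∀ x y : Fin d → Bool, (∀ j ∈ insert i (Par i), x j = y j) → Pc i x = Pc i y)
    (hQc_dep : ∀ i, ∀ x y : Fin d → Bool, (∀ j ∈ insert i (Par i), x j = y j) → Qc i x = Qc i y)
    (hPc_nonneg : ∀ i x, 0 ≤ Pc i x) (hQc_nonneg : ∀ i x, 0 ≤ Qc i x)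
    (hPc_sum : ∀ i (x : Fin d → Bool), ∑ b : Bool, Pc i (Function.update x i b) = 1)
    (hQc_sum : ∀ i (x : Fin d → Bool), ∑ b : Bool, Qc i (Function.update x i b) = 1)
    -- marginal of the parent configuration under P
    (marg : Fin d → (Fin d → Bool) → ℝ)
    (hmarg : ∀ i x, marg i x =
      ∑ y ∈ Finset.univ.filter (fun y : Fin d → Bool => ∀ j ∈ Par i, y j = x j),
        ∏ i', Pc i' y)
    (hclose : ∀ i (x : Fin d → Bool),
      (0 < marg i x → |Pc i x - Qc i x| ≤ c / marg i x) ∧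
      (marg i x = 0 → Qc i x = Pc i x)) :
    ∑ x : Fin d → Bool, |(∏ i, Pc i x) - ∏ i, Qc i x| ≤ 2 * d * 2 ^ k * c :=
  stmt_19_general d k c hc Par hPar_lt hPar_card Pc Qc hPc_dep hQc_dep hPc_nonneg hQc_nonneg hPc_sum
    hQc_sum marg hmarg hclose
end
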